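/- Suppose positive reals a_0, a_1, …, a_j satisfy a_0 < a_1 < ⋯ < a_j, and nonnegative reals E_0, E_1, …, E_{j+1} satisfy E_0 = 0 and a_j E_{j+1} ≤ ∑_{s=1}^{j} (a_s - a_{s-1}) E_s + a_0 P, for all 0 ≤ j ≤ M-1, for a fixed P ≥ 0. Then E_j ≤ P for all 0 ≤ j ≤ M (proof by strong induction). -/
import Mathlib

lemma telesc (a : ℕ → ℝ) (j : ℕ) :
    ∑ s ∈ Finset.Icc 1 j, (a s - a (s - 1)) = a j - a 0 := by
  induction j with
  | zero => simp
  | succ n ih =>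
    rw [Finset.sum_Icc_succ_top (by omega), ih]
    simp

theorem stmt17 (M : ℕ) (a : ℕ → ℝ) (ha : ∀ s, 0 < a s)
    (hmono : ∀ s, a s < a (s + 1)) (E : ℕ → ℝ) (hE : ∀ j, 0 ≤ E j)
    (hE0 : E 0 = 0) (P : ℝ) (hP : 0 ≤ P)
    (hrec : ∀ j, j ≤ M - 1 →
      a j * E (j + 1) ≤ ∑ s ∈ Finset.Icc 1 j, (a s - a (s - 1)) * E s + a 0 * P) :
    ∀ j, j ≤ M → E j ≤ P := by
  intro j
  induction j using Nat.strong_induction_on with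
  | _ j ih =>
    intro hjM
    match j with
    | 0 => simpa [hE0] using hP
    | k + 1 =>
      have hk : k ≤ M - 1 := by omega
      have hrec' := hrec k hk
      have hsum : ∑ s ∈ Finset.Icc 1 k, (a s - a (s - 1)) * E s
          ≤ ∑ s ∈ Finset.Icc 1 k, (a s - a (s - 1)) * P := by
        apply Finset.sum_le_sum
        intro s hs
        simp only [Finset.mem_Icc] at hs
        have hmono' : a (s - 1) ≤ a s := by
          have := hmono (s - 1)
          have hs1 : s - 1 + 1 = s := by omega
          rw [hs1] at this; linarith
        exact mul_le_mul_of_nonneg_left (ih s (by omega) (by omega)) (by linarith)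
      have hsum2 : ∑ s ∈ Finset.Icc 1 k, (a s - a (s - 1)) * P = (a k - a 0) * P := by
        rw [← Finset.sum_mul, telesc]
      have : a k * E (k + 1) ≤ a k * P := by
        calc a k * E (k + 1) ≤ ∑ s ∈ Finset.Icc 1 k, (a s - a (s - 1)) * E s + a 0 * P := hrec'
          _ ≤ (a k - a 0) * P + a 0 * P := by rw [← hsum2]; linarith
          _ = a k * P := by ring
      exact le_of_mul_le_mul_left this (ha k)
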